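/- For a real symmetric N×N matrix Ξ and unit vector v, the Frobenius norm of the error matrix ε(v) = {Ξ, vvᵀ} − (vᵀΞv)·vvᵀ satisfies ‖ε(v)‖²_F = 2‖Ξv‖² − (vᵀΞv)², and among all unit eigenvectors of Ξ, this quantity is minimized by an eigenvector whose eigenvalue has the smallest absolute value. -/
import Mathlib


open Matrix

/-- For a symmetric `Ξ` and unit vector `v`, the error matrix
`ε(v) = {Ξ, vvᵀ} − (vᵀΞv)·vvᵀ` has squared Frobenius norm `2‖Ξv‖² − (vᵀΞv)²`; among unit
eigenvectors of `Ξ`, this is minimized by an eigenvector of smallest absolute eigenvalue. -/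
theorem discrete_error_minimized_by_smallest_eigenvalue {N : ℕ}
    (Xi : Matrix (Fin N) (Fin N) ℝ) (hsymm : Xiᵀ = Xi)
    (eps : (Fin N → ℝ) → Matrix (Fin N) (Fin N) ℝ)
    (heps : ∀ v, eps v = (Xi * vecMulVec v v + vecMulVec v v * Xi)
        - (v ⬝ᵥ Xi.mulVec v) • vecMulVec v v) :
    (∀ v : Fin N → ℝ, ∑ i, v i ^ 2 = 1 →
        ∑ i, ∑ j, (eps v i j) ^ 2
          = 2 * (∑ i, (Xi.mulVec v i) ^ 2) - (v ⬝ᵥ Xi.mulVec v) ^ 2) ∧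
      ∀ (v₀ v : Fin N → ℝ) (μ₀ μ : ℝ),
        (∑ i, v₀ i ^ 2 = 1) → Xi.mulVec v₀ = μ₀ • v₀ →
        (∑ i, v i ^ 2 = 1) → Xi.mulVec v = μ • v →
        |μ₀| ≤ |μ| →
        ∑ i, ∑ j, (eps v₀ i j) ^ 2 ≤ ∑ i, ∑ j, (eps v i j) ^ 2 := by
  have hsym : ∀ k j, Xi k j = Xi j k := by
    intro k j
    conv_lhs => rw [← hsymm]
    exact Matrix.transpose_apply Xi k j
  have entry : ∀ (v : Fin N → ℝ) i j,
      eps v i j = Xi.mulVec v i * v j + v i * Xi.mulVec v j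
        - (v ⬝ᵥ Xi.mulVec v) * (v i * v j) := by
    intro v i j
    rw [heps]
    simp only [Matrix.sub_apply, Matrix.add_apply, Matrix.smul_apply, Matrix.mul_apply,
      vecMulVec_apply, smul_eq_mul]
    have h1 : ∑ k, Xi i k * (v k * v j) = Xi.mulVec v i * v j := by
      rw [Matrix.mulVec, dotProduct, Finset.sum_mul]
      exact Finset.sum_congr rfl fun k _ => by ring
    have h2 : ∑ k, (v i * v k) * Xi k j = v i * Xi.mulVec v j := by
      rw [Matrix.mulVec, dotProduct, Finset.mul_sum]
      exact Finset.sum_congr rfl fun k _ => by rw [hsym k j]; ring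
    rw [h1, h2]
  have main : ∀ v : Fin N → ℝ, (∑ i, v i ^ 2 = 1) →
      ∑ i, ∑ j, (eps v i j) ^ 2
        = 2 * (∑ i, (Xi.mulVec v i) ^ 2) - (v ⬝ᵥ Xi.mulVec v) ^ 2 := by
    intro v hv
    set a : Fin N → ℝ := Xi.mulVec v with ha
    set c : ℝ := v ⬝ᵥ a with hc0
    set S : ℝ := ∑ i, a i ^ 2 with hS
    have hc : ∑ j, v j * a j = c := by rw [hc0, dotProduct]
    have inner : ∀ i, ∑ j, (eps v i j) ^ 2 = a i ^ 2 + (S - c ^ 2) * v i ^ 2 := by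
      intro i
      have hterm : ∀ j, (eps v i j) ^ 2 =
          (a i ^ 2 + c ^ 2 * v i ^ 2 - 2 * c * (a i * v i)) * (v j ^ 2)
          + (v i ^ 2) * (a j ^ 2)
          + (2 * (a i * v i) - 2 * c * v i ^ 2) * (v j * a j) := by
        intro j; rw [entry v i j]; ring
      calc ∑ j, (eps v i j) ^ 2
          = (a i ^ 2 + c ^ 2 * v i ^ 2 - 2 * c * (a i * v i)) * (∑ j, v j ^ 2)
            + (v i ^ 2) * (∑ j, a j ^ 2)
            + (2 * (a i * v i) - 2 * c * v i ^ 2) * (∑ j, v j * a j) := by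
            rw [Finset.mul_sum, Finset.mul_sum, Finset.mul_sum, ← Finset.sum_add_distrib,
              ← Finset.sum_add_distrib]
            exact Finset.sum_congr rfl fun j _ => hterm j
        _ = a i ^ 2 + (S - c ^ 2) * v i ^ 2 := by rw [hv, hc, ← hS]; ring
    calc ∑ i, ∑ j, (eps v i j) ^ 2
        = ∑ i, (a i ^ 2 + (S - c ^ 2) * v i ^ 2) :=
          Finset.sum_congr rfl fun i _ => inner i
      _ = (∑ i, a i ^ 2) + (S - c ^ 2) * (∑ i, v i ^ 2) := by
          rw [Finset.sum_add_distrib, Finset.mul_sum]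
      _ = 2 * (∑ i, a i ^ 2) - c ^ 2 := by rw [hv, ← hS]; ring
  have eig : ∀ (v : Fin N → ℝ) (μ : ℝ), (∑ i, v i ^ 2 = 1) → Xi.mulVec v = μ • v →
      ∑ i, ∑ j, (eps v i j) ^ 2 = μ ^ 2 := by
    intro v μ hv hev
    rw [main v hv, hev]
    have h1 : ∑ i, ((μ • v) i) ^ 2 = μ ^ 2 := by
      calc ∑ i, ((μ • v) i) ^ 2 = μ ^ 2 * ∑ i, v i ^ 2 := by
            rw [Finset.mul_sum]
            exact Finset.sum_congr rfl fun i _ => by simp [smul_eq_mul]; ring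
        _ = μ ^ 2 := by rw [hv, mul_one]
    have h2 : v ⬝ᵥ (μ • v) = μ := by
      calc v ⬝ᵥ (μ • v) = μ * ∑ i, v i ^ 2 := by
            rw [dotProduct, Finset.mul_sum]
            exact Finset.sum_congr rfl fun i _ => by simp [smul_eq_mul]; ring
        _ = μ := by rw [hv, mul_one]
    rw [h1, h2]; ring
  refine ⟨main, ?_⟩
  intro v₀ v μ₀ μ hv₀ hev₀ hv hev habs
  rw [eig v₀ μ₀ hv₀ hev₀, eig v μ hv hev]
  calc μ₀ ^ 2 = |μ₀| ^ 2 := (sq_abs μ₀).symm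
    _ ≤ |μ| ^ 2 := by exact pow_le_pow_left₀ (abs_nonneg μ₀) habs 2
    _ = μ ^ 2 := sq_abs μ
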